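/- arXiv:0910.2533 — 6 statements merged into one kernel-verified Lean document; each statement's English description precedes it below -/
import Mathlib

section
/- For every α ∈ (0, π) there is a constant C(α), depending only on α, such that for every a ∈ ℝ and every h ∈ L²(ℝ; ℂ), ( ∫₀^∞ |(Ch)(a + s e^{iα})|² ds )^{1/2} ≤ C(α) ‖h‖_{L²(ℝ)}, where (Ch)(z) = (1/(2πi)) ∫_ℝ h(u)/(u − z) du. -/
/-!
On the ray `z = a + s e^{iα}` one has `|u - z| ≥ (sin α / 2) (s + |u - a|)`: the imaginary part
gives `s sin α`, and after rotating by `e^{-iα}` it gives `|u - a| sin α`. Hence `|Ch(z)|` is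
dominated by `(π sin α)⁻¹ ∫ |h(u)| / (s + |u - a|) du`, a positive operator with a kernel that is
homogeneous of degree `-1`. Schur's test with the test functions `s^{-1/2}` and `|u - a|^{-1/2}`
bounds it from `L²(ℝ)` to `L²(0, ∞)`, because `∫₀^∞ t^{-1/2} / (t + r) dt ≤ 4 r^{-1/2}`;
translation invariance in `u` makes the bound uniform in `a`.
-/

open MeasureTheory

/-- The Cauchy transform `(Ch)(z) = (1/(2πi)) ∫_ℝ h(u)/(u − z) du`. -/
noncomputable def cauchyT (h : ℝ → ℂ) (z : ℂ) : ℂ :=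
  (1 / (2 * (Real.pi : ℂ) * Complex.I)) * ∫ u : ℝ, h u / ((u : ℂ) - z)

open Set ENNReal

section Schur

variable {X Y : Type*} [MeasurableSpace X] [MeasurableSpace Y] {μ : Measure X} {ν : Measure Y}

theorem sq_lintegral_mul_le_of_weight {K f q : Y → ℝ≥0∞} (hK : AEMeasurable K ν)
    (hf : AEMeasurable f ν) (hq : AEMeasurable q ν) (hq0 : ∀ᵐ y ∂ν, q y ≠ 0 ∧ q y ≠ ∞) :
    (∫⁻ y, K y * f y ∂ν) ^ 2 ≤ (∫⁻ y, K y * q y ∂ν) * ∫⁻ y, K y * f y ^ 2 / q y ∂ν := by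
  have hsplit : (fun y => K y * f y) =ᵐ[ν]
      fun y => (K y * q y) ^ (1 / 2 : ℝ) * (K y * f y ^ 2 / q y) ^ (1 / 2 : ℝ) := by
    filter_upwards [hq0] with y ⟨hq0, hqtop⟩
    have hprod : K y * q y * (K y * f y ^ 2 / q y) = (K y * f y) ^ 2 := by
      calc _ = (q y * (q y)⁻¹) * (K y * f y) ^ 2 := by rw [div_eq_mul_inv]; ring
        _ = _ := by rw [ENNReal.mul_inv_cancel hq0 hqtop, one_mul]
    rw [← ENNReal.mul_rpow_of_nonneg _ _ (by norm_num), hprod, ← ENNReal.rpow_natCast,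
      ← ENNReal.rpow_mul]
    norm_num
  have holder := lintegral_mul_norm_pow_le (hK.mul hq) (hK.mul ((hf.pow_const 2).div hq))
    (p := 1 / 2) (q := 1 / 2) (by norm_num) (by norm_num) (by norm_num)
  simp only [Pi.mul_apply, Pi.div_apply, ← mul_div_assoc] at holder
  rw [lintegral_congr_ae hsplit]
  calc _ ≤ ((∫⁻ y, K y * q y ∂ν) ^ (1 / 2 : ℝ) *
        (∫⁻ y, K y * f y ^ 2 / q y ∂ν) ^ (1 / 2 : ℝ)) ^ 2 := by gcongr
    _ = _ := by
      rw [mul_pow, ← ENNReal.rpow_natCast, ← ENNReal.rpow_natCast, ← ENNReal.rpow_mul,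
        ← ENNReal.rpow_mul]
      norm_num

theorem lintegral_sq_lintegral_le_of_schur [SFinite μ] [SFinite ν] {K : X → Y → ℝ≥0∞}
    {p : X → ℝ≥0∞} {q f : Y → ℝ≥0∞} {A B : ℝ≥0∞} (hK : Measurable (Function.uncurry K))
    (hp : Measurable p) (hq : Measurable q) (hf : AEMeasurable f ν)
    (hq0 : ∀ᵐ y ∂ν, q y ≠ 0 ∧ q y ≠ ∞)
    (hKq : ∀ᵐ x ∂μ, ∫⁻ y, K x y * q y ∂ν ≤ A * p x)
    (hKp : ∀ᵐ y ∂ν, ∫⁻ x, K x y * p x ∂μ ≤ B * q y) :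
    ∫⁻ x, (∫⁻ y, K x y * f y ∂ν) ^ 2 ∂μ ≤ A * B * ∫⁻ y, f y ^ 2 ∂ν := by
  obtain ⟨g, hg, hfg⟩ := hf
  have hfg_int : ∀ x, ∫⁻ y, K x y * f y ∂ν = ∫⁻ y, K x y * g y ∂ν := fun x =>
    lintegral_congr_ae (hfg.mono fun y hy => by simp only [hy])
  have hfg_sq : ∫⁻ y, f y ^ 2 ∂ν = ∫⁻ y, g y ^ 2 ∂ν :=
    lintegral_congr_ae (hfg.mono fun y hy => by simp only [hy])
  simp_rw [hfg_int, hfg_sq]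
  have hKx : ∀ x, Measurable (K x) := fun x => hK.of_uncurry_left
  have hKy : ∀ y, Measurable (K · y) := fun y => hK.of_uncurry_right
  have hF : Measurable (Function.uncurry fun x y => p x * (K x y * g y ^ 2 / q y)) := by
    have hK' : Measurable fun z : X × Y => K z.1 z.2 := hK
    unfold Function.uncurry
    fun_prop
  have hFx : Measurable fun x => ∫⁻ y, p x * (K x y * g y ^ 2 / q y) ∂ν :=
    hF.lintegral_prod_right'
  calc ∫⁻ x, (∫⁻ y, K x y * g y ∂ν) ^ 2 ∂μ
      ≤ ∫⁻ x, A * p x * ∫⁻ y, K x y * g y ^ 2 / q y ∂ν ∂μ := by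
        refine lintegral_mono_ae ?_
        filter_upwards [hKq] with x hx
        exact (sq_lintegral_mul_le_of_weight (hKx x).aemeasurable hg.aemeasurable
          hq.aemeasurable hq0).trans (by gcongr)
    _ = A * ∫⁻ x, ∫⁻ y, p x * (K x y * g y ^ 2 / q y) ∂ν ∂μ := by
        rw [← lintegral_const_mul _ hFx]
        refine lintegral_congr fun x => ?_
        rw [lintegral_const_mul (f := fun y => K x y * g y ^ 2 / q y) _
          (((hKx x).mul (hg.pow_const 2)).div hq), mul_assoc]
    _ = A * ∫⁻ y, g y ^ 2 / q y * ∫⁻ x, K x y * p x ∂μ ∂ν := by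
        rw [lintegral_lintegral_swap hF.aemeasurable]
        refine congrArg _ (lintegral_congr fun y => ?_)
        rw [← lintegral_const_mul (f := fun x => K x y * p x) _ ((hKy y).mul hp)]
        refine lintegral_congr fun x => ?_
        simp only [div_eq_mul_inv]
        ring
    _ ≤ A * ∫⁻ y, B * g y ^ 2 ∂ν := by
        gcongr A * ?_
        refine lintegral_mono_ae ?_
        filter_upwards [hKp, hq0] with y hy ⟨hq0, hqtop⟩
        calc g y ^ 2 / q y * ∫⁻ x, K x y * p x ∂μ ≤ g y ^ 2 / q y * (B * q y) := by gcongr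
          _ = (q y * (q y)⁻¹) * (B * g y ^ 2) := by rw [div_eq_mul_inv]; ring
          _ = B * g y ^ 2 := by rw [ENNReal.mul_inv_cancel hq0 hqtop, one_mul]
    _ = A * B * ∫⁻ y, g y ^ 2 ∂ν := by rw [lintegral_const_mul _ (hg.pow_const 2), mul_assoc]

end Schur

theorem setLIntegral_le_ofReal_setIntegral {α : Type*} [MeasurableSpace α] {μ : Measure α}
    {f : α → ℝ≥0∞} {g : α → ℝ} {s : Set α} (hs : MeasurableSet s) (hg : IntegrableOn g s μ)
    (hg0 : ∀ x ∈ s, 0 ≤ g x) (hfg : ∀ x ∈ s, f x ≤ ENNReal.ofReal (g x)) :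
    ∫⁻ x in s, f x ∂μ ≤ ENNReal.ofReal (∫ x in s, g x ∂μ) := by
  rw [ofReal_integral_eq_lintegral_ofReal hg ((ae_restrict_iff' hs).mpr (.of_forall hg0))]
  exact setLIntegral_mono_ae' hs (.of_forall hfg)

theorem lintegral_Ioi_inv_add_mul_rpow_neg_half_le {r : ℝ} (hr : 0 < r) :
    ∫⁻ t in Ioi 0, (ENNReal.ofReal (t + r))⁻¹ * ENNReal.ofReal t ^ (-(1 / 2) : ℝ)
      ≤ 4 * ENNReal.ofReal r ^ (-(1 / 2) : ℝ) := by
  have hpt : ∀ t ∈ Ioi (0 : ℝ), (ENNReal.ofReal (t + r))⁻¹ * ENNReal.ofReal t ^ (-(1 / 2) : ℝ)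
      = ENNReal.ofReal ((t + r)⁻¹ * t ^ (-(1 / 2) : ℝ)) := fun t (ht : 0 < t) => by
    rw [ENNReal.ofReal_mul (by positivity), ENNReal.ofReal_inv_of_pos (by positivity),
      ENNReal.ofReal_rpow_of_pos ht]
  have hnear : ∫⁻ t in Ioc 0 r, ENNReal.ofReal ((t + r)⁻¹ * t ^ (-(1 / 2) : ℝ))
      ≤ ENNReal.ofReal (2 * r ^ (-(1 / 2) : ℝ)) := by
    have hint : IntegrableOn (fun t : ℝ => r⁻¹ * t ^ (-(1 / 2) : ℝ)) (Ioc 0 r) := by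
      refine (intervalIntegrable_iff_integrableOn_Ioc_of_le hr.le).mp ?_
      exact (intervalIntegral.intervalIntegrable_rpow' (by norm_num)).const_mul _
    refine (setLIntegral_le_ofReal_setIntegral measurableSet_Ioc hint
      (fun t ht => by have := ht.1; positivity) fun t ht => ?_).trans_eq ?_
    · have := ht.1
      gcongr
      linarith
    · rw [integral_const_mul, ← intervalIntegral.integral_of_le hr.le,
        integral_rpow (Or.inl (by norm_num)), show (-(1 / 2) : ℝ) + 1 = 1 / 2 by norm_num,
        show (-(1 / 2) : ℝ) = 1 / 2 - 1 by norm_num, Real.rpow_sub_one hr.ne',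
        Real.zero_rpow (by norm_num)]
      ring_nf
  have hfar : ∫⁻ t in Ioi r, ENNReal.ofReal ((t + r)⁻¹ * t ^ (-(1 / 2) : ℝ))
      ≤ ENNReal.ofReal (2 * r ^ (-(1 / 2) : ℝ)) := by
    refine (setLIntegral_le_ofReal_setIntegral measurableSet_Ioi
      (integrableOn_Ioi_rpow_of_lt (a := -(3 / 2)) (by norm_num) hr)
      (fun t ht => by have := hr.trans ht; positivity) fun t ht => ?_).trans_eq ?_
    · have ht0 : 0 < t := hr.trans ht
      rw [show (-(3 / 2) : ℝ) = -(1 / 2) - 1 by norm_num, Real.rpow_sub_one ht0.ne',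
        div_eq_inv_mul _ t]
      gcongr
      linarith
    · rw [integral_Ioi_rpow_of_lt (by norm_num) hr, show (-(3 / 2) : ℝ) + 1 = -(1 / 2) by norm_num]
      ring_nf
  rw [setLIntegral_congr_fun measurableSet_Ioi hpt, ← Ioc_union_Ioi_eq_Ioi hr.le,
    lintegral_union measurableSet_Ioi (Ioc_disjoint_Ioi le_rfl)]
  calc _ ≤ ENNReal.ofReal (2 * r ^ (-(1 / 2) : ℝ)) + ENNReal.ofReal (2 * r ^ (-(1 / 2) : ℝ)) :=
        add_le_add hnear hfar
    _ = _ := by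
      rw [← two_mul, ENNReal.ofReal_mul zero_le_two, ENNReal.ofReal_rpow_of_pos hr, ← mul_assoc]
      norm_num

theorem lintegral_comp_abs {f : ℝ → ℝ≥0∞} (hf : Measurable f) :
    ∫⁻ x, f |x| = 2 * ∫⁻ x in Ioi 0, f x := by
  have hsplit : (fun x => f |x|) =ᵐ[volume]
      fun x => (Ioi 0).indicator f x + (Ioi 0).indicator f (-x) := by
    filter_upwards [Measure.ae_ne volume 0] with x hx
    rcases hx.lt_or_gt with hneg | hpos
    · simp [indicator, hneg.not_gt, hneg, abs_of_neg hneg]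
    · simp [indicator, hpos, hpos.not_gt, abs_of_pos hpos]
  have hind : Measurable ((Ioi (0 : ℝ)).indicator f) := hf.indicator measurableSet_Ioi
  rw [lintegral_congr_ae hsplit, lintegral_add_left hind,
    lintegral_neg_eq_self ((Ioi (0 : ℝ)).indicator f), lintegral_indicator measurableSet_Ioi,
    two_mul]

theorem lintegral_inv_add_abs_sub_mul_rpow_neg_half_le (a : ℝ) {s : ℝ} (hs : 0 < s) :
    ∫⁻ u, (ENNReal.ofReal (s + |u - a|))⁻¹ * ENNReal.ofReal |u - a| ^ (-(1 / 2) : ℝ)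
      ≤ 8 * ENNReal.ofReal s ^ (-(1 / 2) : ℝ) := by
  rw [lintegral_sub_right_eq_self
      (fun v => (ENNReal.ofReal (s + |v|))⁻¹ * ENNReal.ofReal |v| ^ (-(1 / 2) : ℝ)) a,
    lintegral_comp_abs
      (f := fun t => (ENNReal.ofReal (s + t))⁻¹ * ENNReal.ofReal t ^ (-(1 / 2) : ℝ)) (by fun_prop)]
  simp_rw [add_comm s]
  calc _ ≤ 2 * (4 * ENNReal.ofReal s ^ (-(1 / 2) : ℝ)) := by
        gcongr
        exact lintegral_Ioi_inv_add_mul_rpow_neg_half_le hs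
    _ = _ := by rw [← mul_assoc]; norm_num

theorem lintegral_Ioi_sq_lintegral_inv_add_abs_sub_le (a : ℝ) {f : ℝ → ℝ≥0∞}
    (hf : AEMeasurable f) :
    ∫⁻ s in Ioi 0, (∫⁻ u, (ENNReal.ofReal (s + |u - a|))⁻¹ * f u) ^ 2
      ≤ 8 * 4 * ∫⁻ u, f u ^ 2 := by
  refine lintegral_sq_lintegral_le_of_schur (by fun_prop)
    (p := fun s => ENNReal.ofReal s ^ (-(1 / 2) : ℝ))
    (q := fun u => ENNReal.ofReal |u - a| ^ (-(1 / 2) : ℝ)) (by fun_prop) (by fun_prop) hf ?_ ?_ ?_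
  · filter_upwards [Measure.ae_ne volume a] with u hu
    have hpos : 0 < |u - a| := abs_pos.mpr (sub_ne_zero.mpr hu)
    rw [ENNReal.ofReal_rpow_of_pos hpos]
    exact ⟨(ENNReal.ofReal_pos.mpr (Real.rpow_pos_of_pos hpos _)).ne', ENNReal.ofReal_ne_top⟩
  · filter_upwards [ae_restrict_mem measurableSet_Ioi] with s hs
    exact lintegral_inv_add_abs_sub_mul_rpow_neg_half_le a hs
  · filter_upwards [Measure.ae_ne volume a] with u hu
    exact lintegral_Ioi_inv_add_mul_rpow_neg_half_le (abs_pos.mpr (sub_ne_zero.mpr hu))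

theorem eLpNorm_two_sq {X ε : Type*} [MeasurableSpace X] [ENorm ε] (μ : Measure X) (f : X → ε) :
    eLpNorm f 2 μ ^ 2 = ∫⁻ x, ‖f x‖ₑ ^ 2 ∂μ := by
  simpa using eLpNorm_nnreal_pow_eq_lintegral (f := f) (μ := μ) (p := 2) two_ne_zero

theorem eLpNorm_two_le_of_lintegral_sq_le {X Y ε ε' : Type*} [MeasurableSpace X]
    [MeasurableSpace Y] {μ : Measure X} {ν : Measure Y} [ENorm ε] [ENorm ε'] {f : X → ε}
    {g : Y → ε'} {C : ℝ≥0∞} (h : ∫⁻ x, ‖f x‖ₑ ^ 2 ∂μ ≤ C ^ 2 * ∫⁻ y, ‖g y‖ₑ ^ 2 ∂ν) :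
    eLpNorm f 2 μ ≤ C * eLpNorm g 2 ν := by
  rwa [← ENNReal.pow_le_pow_left_iff two_ne_zero, mul_pow, eLpNorm_two_sq, eLpNorm_two_sq]

theorem sin_mul_add_abs_le_two_mul_norm_sub {α x s : ℝ} (hα : 0 ≤ Real.sin α) (hs : 0 ≤ s) :
    Real.sin α * (s + |x|) ≤ 2 * ‖(x : ℂ) - s * Complex.exp (α * Complex.I)‖ := by
  set w : ℂ := x - s * Complex.exp (α * Complex.I)
  have him : s * Real.sin α ≤ ‖w‖ := by
    have : w.im = -(s * Real.sin α) := by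
      rw [Complex.sub_im, Complex.ofReal_im, Complex.im_ofReal_mul, Complex.exp_ofReal_mul_I_im]
      ring
    calc s * Real.sin α = |w.im| := by rw [this, abs_neg, abs_of_nonneg (by positivity)]
      _ ≤ ‖w‖ := Complex.abs_im_le_norm w
  have hrot : |x| * Real.sin α ≤ ‖w‖ := by
    have hw : w * Complex.exp (-(α * Complex.I)) = x * Complex.exp ((-α : ℝ) * Complex.I) - s := by
      simp only [w, sub_mul, mul_assoc, ← Complex.exp_add, add_neg_cancel, Complex.exp_zero,
        mul_one, Complex.ofReal_neg, neg_mul]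
    have : (w * Complex.exp (-(α * Complex.I))).im = -(x * Real.sin α) := by
      rw [hw, Complex.sub_im, Complex.im_ofReal_mul, Complex.exp_ofReal_mul_I_im, Complex.ofReal_im,
        Real.sin_neg]
      ring
    calc |x| * Real.sin α = |(w * Complex.exp (-(α * Complex.I))).im| := by
          rw [this, abs_neg, abs_mul, abs_of_nonneg hα]
      _ ≤ ‖w * Complex.exp (-(α * Complex.I))‖ := Complex.abs_im_le_norm _
      _ = ‖w‖ := by
          rw [norm_mul, ← neg_mul, ← Complex.ofReal_neg, Complex.norm_exp_ofReal_mul_I, mul_one]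
  linarith

theorem enorm_div_sub_ray_le (c : ℂ) {α : ℝ} (hα : 0 < Real.sin α) (a u : ℝ) {s : ℝ} (hs : 0 < s) :
    ‖c / ((u : ℂ) - (a + s * Complex.exp (α * Complex.I)))‖ₑ
      ≤ ENNReal.ofReal (2 / Real.sin α) * ((ENNReal.ofReal (s + |u - a|))⁻¹ * ‖c‖ₑ) := by
  have hgeom := sin_mul_add_abs_le_two_mul_norm_sub (x := u - a) hα.le hs.le
  rw [show ((u - a : ℝ) : ℂ) - s * Complex.exp (α * Complex.I)
      = u - (a + s * Complex.exp (α * Complex.I)) by push_cast; ring] at hgeom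
  have hpos : 0 < s + |u - a| := by positivity
  rw [div_eq_mul_inv, enorm_mul, mul_comm, ← mul_assoc, ← ofReal_norm (_⁻¹),
    ← ENNReal.ofReal_inv_of_pos hpos, ← ENNReal.ofReal_mul (by positivity)]
  gcongr
  calc ‖((u : ℂ) - (a + s * Complex.exp (α * Complex.I)))⁻¹‖
      ≤ (Real.sin α * (s + |u - a|) / 2)⁻¹ := by
        rw [norm_inv]
        exact inv_anti₀ (by positivity) (by linarith)
    _ = 2 / Real.sin α * (s + |u - a|)⁻¹ := by field_simp

theorem enorm_cauchyT_ray_le (h : ℝ → ℂ) {α : ℝ} (hα : 0 < Real.sin α) (a : ℝ) {s : ℝ}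
    (hs : 0 < s) :
    ‖cauchyT h (a + s * Complex.exp (α * Complex.I))‖ₑ
      ≤ ENNReal.ofReal (Real.pi * Real.sin α)⁻¹
        * ∫⁻ u, (ENNReal.ofReal (s + |u - a|))⁻¹ * ‖h u‖ₑ := by
  have hconst : ‖1 / (2 * (Real.pi : ℂ) * Complex.I)‖ₑ = ENNReal.ofReal (2 * Real.pi)⁻¹ := by
    rw [← ofReal_norm]
    simp [abs_of_pos Real.pi_pos]
  calc ‖cauchyT h (a + s * Complex.exp (α * Complex.I))‖ₑ
      ≤ ENNReal.ofReal (2 * Real.pi)⁻¹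
        * ∫⁻ u, ‖h u / ((u : ℂ) - (a + s * Complex.exp (α * Complex.I)))‖ₑ := by
        rw [cauchyT, enorm_mul, hconst]
        gcongr
        exact enorm_integral_le_lintegral_enorm _
    _ ≤ ENNReal.ofReal (2 * Real.pi)⁻¹
        * ∫⁻ u, ENNReal.ofReal (2 / Real.sin α) * ((ENNReal.ofReal (s + |u - a|))⁻¹ * ‖h u‖ₑ) := by
        gcongr with u
        exact enorm_div_sub_ray_le _ hα a u hs
    _ = _ := by
        rw [lintegral_const_mul' _ _ ENNReal.ofReal_ne_top, ← mul_assoc,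
          ← ENNReal.ofReal_mul (by positivity)]
        congr 2
        field_simp

/-- Carleson-type embedding for rays: for every `α ∈ (0, π)` there is `C(α)` such that
for every base point `a ∈ ℝ` and every `h ∈ L²(ℝ)`,
`(∫₀^∞ |(Ch)(a + s e^{iα})|² ds)^{1/2} ≤ C(α) ‖h‖_{L²}`. -/
theorem stmt5 (α : ℝ) (hα : α ∈ Set.Ioo 0 Real.pi) :
    ∃ C : ℝ, 0 < C ∧
      ∀ (a : ℝ) (h : ℝ → ℂ), MemLp h 2 volume →
        eLpNorm
            (fun s : ℝ =>
              cauchyT h ((a : ℂ) + (s : ℂ) * Complex.exp ((α : ℂ) * Complex.I)))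
            2 (volume.restrict (Set.Ioi 0))
          ≤ ENNReal.ofReal C * eLpNorm h 2 volume := by
  have hσ : 0 < Real.sin α := Real.sin_pos_of_pos_of_lt_pi hα.1 hα.2
  refine ⟨√32 / (Real.pi * Real.sin α), by positivity, fun a h hh => ?_⟩
  apply eLpNorm_two_le_of_lintegral_sq_le
  set c := ENNReal.ofReal (Real.pi * Real.sin α)⁻¹
  calc ∫⁻ s in Ioi (0 : ℝ), ‖cauchyT h (a + s * Complex.exp (α * Complex.I))‖ₑ ^ 2
      ≤ ∫⁻ s in Ioi (0 : ℝ), c ^ 2 * (∫⁻ u, (ENNReal.ofReal (s + |u - a|))⁻¹ * ‖h u‖ₑ) ^ 2 := by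
        refine setLIntegral_mono_ae' measurableSet_Ioi (.of_forall fun s (hs : 0 < s) => ?_)
        rw [← mul_pow]
        gcongr
        exact enorm_cauchyT_ray_le h hσ a hs
    _ ≤ c ^ 2 * (8 * 4 * ∫⁻ u, ‖h u‖ₑ ^ 2) := by
        rw [lintegral_const_mul' _ _ (by simp [c])]
        gcongr
        exact lintegral_Ioi_sq_lintegral_inv_add_abs_sub_le a hh.1.enorm
    _ = ENNReal.ofReal (√32 / (Real.pi * Real.sin α)) ^ 2 * ∫⁻ u, ‖h u‖ₑ ^ 2 := by
        rw [← mul_assoc, ← ENNReal.ofReal_pow (by positivity), ← ENNReal.ofReal_pow (by positivity),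
          div_pow, Real.sq_sqrt (by norm_num), show (8 * 4 : ℝ≥0∞) = ENNReal.ofReal 32 by norm_num,
          ← ENNReal.ofReal_mul (by positivity), div_eq_mul_inv, ← inv_pow, mul_comm (32 : ℝ)]
end

section
/- Let h ∈ L²(ℝ; ℂ) have a distributional derivative h' ∈ L²(ℝ; ℂ) (so that h has a continuous representative), let λ₀ ∈ ℝ satisfy h(λ₀) = 0, and let c > 0. Then the limit of (Ch)(z) as z → λ₀ with z constrained to the nontangential region {z ∈ ℂ : Im z ≠ 0 and |Re z − λ₀| ≤ c |Im z|} exists; that is, there is L ∈ ℂ such that for every ε > 0 there is δ > 0 with |(Ch)(z) − L| < ε whenever 0 < |z − λ₀| < δ, Im z ≠ 0 and |Re z − λ₀| ≤ c |Im z|. Here (Ch)(z) = (1/(2πi)) ∫_ℝ h(u)/(u − z) du. -/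
open MeasureTheory Filter Metric Topology

lemma aestronglyMeasurable_div_ofReal_sub {h : ℝ → ℂ} (hh : AEStronglyMeasurable h volume)
    (z : ℂ) : AEStronglyMeasurable (fun u : ℝ => h u / ((u : ℂ) - z)) volume := by
  simp only [div_eq_mul_inv]
  fun_prop

lemma norm_intervalIntegral_le_eLpNorm_mul_sqrt {E : Type*} [NormedAddCommGroup E]
    [NormedSpace ℝ E] {f : ℝ → E} (hf : MemLp f 2 volume) (a b : ℝ) :
    ‖∫ x in a..b, f x‖ ≤ (eLpNorm f 2 volume).toReal * √|b - a| := by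
  set s := Set.uIoc a b
  have hm : AEStronglyMeasurable f (volume.restrict s) := hf.1.restrict
  have holder : eLpNorm f 1 (volume.restrict s) ≤ eLpNorm f 2 volume * volume s ^ (1 / 2 : ℝ) :=
    calc eLpNorm f 1 (volume.restrict s)
        ≤ eLpNorm f 2 (volume.restrict s) * volume s ^ (1 / 2 : ℝ) := by
          refine (eLpNorm_le_eLpNorm_mul_rpow_measure_univ (p := 1) (q := 2) (by norm_num)
            hm).trans_eq ?_
          rw [Measure.restrict_apply_univ]
          norm_num
      _ ≤ eLpNorm f 2 volume * volume s ^ (1 / 2 : ℝ) := by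
          gcongr
          exact Measure.restrict_le_self
  have hfin : eLpNorm f 2 volume * volume s ^ (1 / 2 : ℝ) ≠ ⊤ := by
    rw [Real.volume_uIoc]
    exact ENNReal.mul_ne_top hf.2.ne (by simp)
  calc ‖∫ x in a..b, f x‖
      ≤ ∫ x in s, ‖f x‖ := intervalIntegral.norm_integral_le_integral_norm_uIoc
    _ = (eLpNorm f 1 (volume.restrict s)).toReal := by
      rw [integral_norm_eq_lintegral_enorm hm, eLpNorm_one_eq_lintegral_enorm]
    _ ≤ (eLpNorm f 2 volume * volume s ^ (1 / 2 : ℝ)).toReal := ENNReal.toReal_mono hfin holder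
    _ = (eLpNorm f 2 volume).toReal * √|b - a| := by
      rw [ENNReal.toReal_mul, ← ENNReal.toReal_rpow, Real.volume_uIoc,
        ENNReal.toReal_ofReal (abs_nonneg _), Real.sqrt_eq_rpow]

lemma memLp_two_inv_ofReal_sub {z : ℂ} (hz : z.im ≠ 0) :
    MemLp (fun u : ℝ => ((u : ℂ) - z)⁻¹) 2 volume := by
  have hm : AEStronglyMeasurable (fun u : ℝ => ((u : ℂ) - z)⁻¹) volume := by fun_prop
  rw [memLp_two_iff_integrable_sq_norm hm]
  have hsq : ∀ u : ℝ,
      ‖((u : ℂ) - z)⁻¹‖ ^ 2 = (z.im ^ 2)⁻¹ * (1 + ((u - z.re) / z.im) ^ 2)⁻¹ := by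
    intro u
    rw [norm_inv, inv_pow, Complex.sq_norm, Complex.normSq_apply, ← mul_inv]
    congr 1
    simp only [Complex.sub_re, Complex.ofReal_re, Complex.sub_im, Complex.ofReal_im]
    field_simp
    ring
  simp_rw [hsq]
  exact ((integrable_inv_one_add_sq.comp_div hz).comp_sub_right z.re).const_mul _

lemma norm_div_le_mul_norm_div {𝕜 : Type*} [NormedField 𝕜] {w x y : 𝕜} {k : ℝ} (hy : y ≠ 0)
    (hyx : ‖y‖ ≤ k * ‖x‖) : ‖w / x‖ ≤ k * ‖w / y‖ := by
  have hx : 0 < ‖x‖ := by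
    contrapose! hy
    exact norm_le_zero_iff.mp (hyx.trans (by simp [norm_le_zero_iff.mp hy]))
  rw [norm_div, norm_div, mul_div_assoc', div_le_div_iff₀ hx (norm_pos_iff.mpr hy)]
  nlinarith [norm_nonneg w]

lemma locallyIntegrable_div_ofReal_sub {h : ℝ → ℂ} {a C : ℝ} (hh : AEStronglyMeasurable h volume)
    (hC : ∀ u, ‖h u‖ ≤ C * √|u - a|) :
    LocallyIntegrable (fun u : ℝ => h u / ((u : ℂ) - a)) volume := by
  -- `locallyIntegrable_of_norm_le_rpow` measures the singularity at the origin, so shift `a` to `0`.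
  have hshift : LocallyIntegrable (fun x : ℝ => h (x + a) / (x : ℂ)) volume := by
    refine locallyIntegrable_of_norm_le_rpow (C := C) (α := 1 / 2) (by simp) (by norm_num)
      (ae_of_all _ fun x => ?_) ?_
    · rcases eq_or_ne x 0 with rfl | hx
      · simp [Real.zero_rpow]
      have hx' : 0 < |x| := abs_pos.mpr hx
      calc ‖h (x + a) / (x : ℂ)‖ = ‖h (x + a)‖ / |x| := by
            rw [norm_div, Complex.norm_real, Real.norm_eq_abs]
        _ ≤ C * √|x| / |x| := by
          gcongr
          simpa using hC (x + a)
        _ = C * ‖x‖ ^ (-(1 / 2) : ℝ) := by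
          rw [Real.norm_eq_abs, mul_div_assoc, Real.sqrt_eq_rpow, ← Real.rpow_sub_one hx'.ne']
          norm_num
    · have := (aestronglyMeasurable_div_ofReal_sub hh a).comp_measurePreserving
        (measurePreserving_add_right volume a)
      simpa [Function.comp_def] using this
  have hg := (locallyIntegrable_map_homeomorph (μ := volume) (Homeomorph.addRight (-a))
    (f := fun x : ℝ => h (x + a) / (x : ℂ))).mp
      (by rwa [Homeomorph.coe_addRight, map_add_right_eq_self])
  have hcomp : (fun x : ℝ => h (x + a) / (x : ℂ)) ∘ Homeomorph.addRight (-a) =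
      fun u : ℝ => h u / ((u : ℂ) - a) := by
    ext u
    simp [sub_eq_add_neg]
  rwa [hcomp] at hg

lemma integrableOn_compl_closedBall_div_ofReal_sub {h : ℝ → ℂ} (hh : MemLp h 2 volume) (a : ℝ) :
    IntegrableOn (fun u : ℝ => h u / ((u : ℂ) - a)) (closedBall a 1)ᶜ volume := by
  set z : ℂ := a + Complex.I
  have hz : Integrable (fun u : ℝ => h u / ((u : ℂ) - z)) volume := by
    simpa only [div_eq_mul_inv, Pi.mul_def] using
      hh.integrable_mul (memLp_two_inv_ofReal_sub (z := z) (by simp [z]))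
  refine (hz.norm.const_mul 2).integrableOn.mono'
    (aestronglyMeasurable_div_ofReal_sub hh.1 a).restrict ?_
  rw [ae_restrict_iff' measurableSet_closedBall.compl]
  refine ae_of_all _ fun u hu => ?_
  have hua : 1 < ‖(u : ℂ) - a‖ := by
    simpa [dist_eq_norm, ← Complex.ofReal_sub] using hu
  have huz : (u : ℂ) - z ≠ 0 := fun h0 => by simpa [z] using congrArg Complex.im h0
  refine norm_div_le_mul_norm_div huz ?_
  calc ‖(u : ℂ) - z‖ = ‖((u : ℂ) - a) - Complex.I‖ := by rw [sub_sub]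
    _ ≤ ‖(u : ℂ) - a‖ + ‖Complex.I‖ := norm_sub_le _ _
    _ ≤ 2 * ‖(u : ℂ) - a‖ := by rw [Complex.norm_I]; linarith

lemma integrable_div_ofReal_sub {h h' : ℝ → ℂ} {a : ℝ} (hh : MemLp h 2 volume)
    (hh' : MemLp h' 2 volume) (hftc : ∀ b, h b - h a = ∫ x in a..b, h' x) (ha : h a = 0) :
    Integrable (fun u : ℝ => h u / ((u : ℂ) - a)) volume := by
  have hC : ∀ u, ‖h u‖ ≤ (eLpNorm h' 2 volume).toReal * √|u - a| := fun u => by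
    have := norm_intervalIntegral_le_eLpNorm_mul_sqrt hh' a u
    rwa [← hftc u, ha, sub_zero] at this
  have hnear := (locallyIntegrable_div_ofReal_sub hh.1 hC).integrableOn_isCompact
    (isCompact_closedBall a 1)
  simpa using hnear.union (integrableOn_compl_closedBall_div_ofReal_sub hh a)

def nontangentialCone (a c : ℝ) : Set ℂ := {z | z.im ≠ 0 ∧ |z.re - a| ≤ c * |z.im|}

lemma norm_ofReal_sub_le_of_mem_nontangentialCone {a c : ℝ} (hc : 0 ≤ c) {z : ℂ}
    (hz : z ∈ nontangentialCone a c) (u : ℝ) : ‖(u : ℂ) - a‖ ≤ (c + 2) * ‖(u : ℂ) - z‖ := by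
  have him : |z.im| ≤ ‖(u : ℂ) - z‖ := by
    simpa using Complex.abs_im_le_norm ((u : ℂ) - z)
  have hza : ‖z - a‖ ≤ |z.re - a| + |z.im| := by
    simpa using Complex.norm_le_abs_re_add_abs_im (z - a)
  calc ‖(u : ℂ) - a‖ = ‖((u : ℂ) - z) + (z - a)‖ := by ring_nf
    _ ≤ ‖(u : ℂ) - z‖ + ‖z - a‖ := norm_add_le _ _
    _ ≤ (c + 2) * ‖(u : ℂ) - z‖ := by nlinarith [hz.2]

theorem tendsto_cauchyT_nhdsWithin_nontangentialCone {h : ℝ → ℂ} {a c : ℝ} (hc : 0 ≤ c)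
    (hh : AEStronglyMeasurable h volume) (ha : h a = 0)
    (hg : Integrable (fun u : ℝ => h u / ((u : ℂ) - a)) volume) :
    Tendsto (cauchyT h) (𝓝[nontangentialCone a c] (a : ℂ)) (𝓝 (cauchyT h a)) := by
  refine (tendsto_integral_filter_of_dominated_convergence
    (fun u => (c + 2) * ‖h u / ((u : ℂ) - a)‖)
    (Eventually.of_forall (aestronglyMeasurable_div_ofReal_sub hh)) ?_ (hg.norm.const_mul _)
    (ae_of_all _ fun u => ?_)).const_mul _
  · refine eventually_nhdsWithin_of_forall fun z hz => ae_of_all _ fun u => ?_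
    rcases eq_or_ne u a with rfl | hua
    · simp [ha]
    refine norm_div_le_mul_norm_div (by simpa [sub_eq_zero] using hua) ?_
    exact norm_ofReal_sub_le_of_mem_nontangentialCone hc hz u
  · rcases eq_or_ne u a with rfl | hua
    · simpa [ha] using tendsto_const_nhds
    have hden : (u : ℂ) - a ≠ 0 := by simpa [sub_eq_zero] using hua
    exact (((continuousAt_const.sub continuousAt_id).inv₀ hden).const_mul (h u)).tendsto.mono_left
      nhdsWithin_le_nhds

/-- Existence of the nontangential limit of the Cauchy transform at a point where `h`
vanishes: if `h ∈ L²` has a distributional derivative `h' ∈ L²` (encoded by the FTC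
identity, so `h` is the continuous representative), `h(λ₀) = 0` and `c > 0`, then
`(Ch)(z)` converges as `z → λ₀` in the nontangential region
`{z : Im z ≠ 0, |Re z − λ₀| ≤ c |Im z|}`. -/
theorem stmt7 (h h' : ℝ → ℂ) (hh : MemLp h 2 volume) (hh' : MemLp h' 2 volume)
    (hftc : ∀ a b : ℝ, h b - h a = ∫ x in a..b, h' x)
    (lam0 : ℝ) (h0 : h lam0 = 0) (c : ℝ) (hc : 0 < c) :
    ∃ L : ℂ, ∀ ε : ℝ, 0 < ε → ∃ δ : ℝ, 0 < δ ∧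
      ∀ z : ℂ, 0 < ‖z - (lam0 : ℂ)‖ → ‖z - (lam0 : ℂ)‖ < δ →
        z.im ≠ 0 → |z.re - lam0| ≤ c * |z.im| →
        ‖cauchyT h z - L‖ < ε := by
  have hlim := tendsto_cauchyT_nhdsWithin_nontangentialCone hc.le hh.1 h0
    (integrable_div_ofReal_sub hh hh' (hftc lam0) h0)
  refine ⟨cauchyT h lam0, fun ε hε => ?_⟩
  obtain ⟨δ, hδ, hclose⟩ := tendsto_nhdsWithin_nhds.mp hlim ε hε
  refine ⟨δ, hδ, fun z _ hzδ him hre => ?_⟩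
  simpa only [dist_eq_norm] using hclose ⟨him, hre⟩ (by rwa [dist_eq_norm])
end

section
/- For every α ∈ (0, π) and every d > 0 there is a constant C(α, d) such that the following holds. Let λ₀ ∈ ℝ and let h ∈ L²(ℝ; ℂ) ∩ L∞(ℝ; ℂ) satisfy h(u) = 0 for almost every u with |u − λ₀| < d. Then for every point z = λ₀ + s e^{iα} with s > 0, | (1/(2πi)) ∫_ℝ h(u)/(u − z)² du | ≤ C(α, d) ‖h‖_∞ / (1 + |z − λ₀|). (The left-hand side is the complex derivative of the Cauchy transform Ch at z.) -/
/-!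
With `t = u - λ₀`, the point `z = λ₀ + s e^{iα}` satisfies
`|u - z|² = t² - 2ts cos α + s² ≥ (1 - |cos α|)(t² + s²)`. Where `h` lives, `|t| ≥ d`, so this
dominates `(1 - |cos α|)(t² + (d + s)²) / 3`, whose reciprocal integrates to
`3π / ((1 - |cos α|)(d + s))`; finally `1 / (d + s) ≤ (1 + 1/d) / (1 + s)`.
-/

open MeasureTheory Real Complex

lemma inv_sq_add_sq_eq (a x : ℝ) (ha : a ≠ 0) :
    (a ^ 2 + x ^ 2)⁻¹ = (a ^ 2)⁻¹ * (1 + (x / a) ^ 2)⁻¹ := by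
  field_simp

lemma integrable_inv_sq_add_sq {a : ℝ} (ha : a ≠ 0) :
    Integrable fun x : ℝ ↦ (a ^ 2 + x ^ 2)⁻¹ := by
  simpa only [inv_sq_add_sq_eq a _ ha] using
    (integrable_inv_one_add_sq.comp_div ha).const_mul (a ^ 2)⁻¹

lemma integral_univ_inv_sq_add_sq {a : ℝ} (ha : 0 < a) :
    ∫ x : ℝ, (a ^ 2 + x ^ 2)⁻¹ = π / a := by
  simp only [inv_sq_add_sq_eq a _ ha.ne', integral_const_mul,
    Measure.integral_comp_div (fun y ↦ (1 + y ^ 2)⁻¹), integral_univ_inv_one_add_sq,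
    abs_of_pos ha, smul_eq_mul]
  field_simp

lemma norm_ofReal_sub_mul_exp_sq (x s α : ℝ) :
    ‖(x : ℂ) - s * exp (α * I)‖ ^ 2 = x ^ 2 - 2 * x * s * Real.cos α + s ^ 2 := by
  rw [Complex.sq_norm, normSq_apply]
  simp only [exp_mul_I, sub_re, ofReal_re, mul_re, add_re, cos_ofReal_re, sin_ofReal_re, I_re,
    mul_zero, sin_ofReal_im, I_im, mul_one, sub_self, add_zero, ofReal_im, add_im, cos_ofReal_im,
    mul_im, zero_add, zero_mul, sub_zero, sub_im, zero_sub, mul_neg, neg_mul, neg_neg]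
  nlinarith [Real.sin_sq_add_cos_sq α]

lemma one_sub_abs_cos_mul_le_norm_sub_sq (x s α : ℝ) :
    (1 - |Real.cos α|) * (x ^ 2 + s ^ 2) ≤ ‖(x : ℂ) - s * exp (α * I)‖ ^ 2 := by
  have hxs : 2 * x * s * Real.cos α ≤ |Real.cos α| * (x ^ 2 + s ^ 2) := by
    have := mul_le_mul_of_nonneg_left (two_mul_le_add_sq |x| |s|) (abs_nonneg (Real.cos α))
    rw [sq_abs, sq_abs] at this
    calc 2 * x * s * Real.cos α ≤ |2 * x * s * Real.cos α| := le_abs_self _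
      _ = |Real.cos α| * (2 * |x| * |s|) := by simp only [abs_mul, abs_two]; ring
      _ ≤ _ := this
  rw [norm_ofReal_sub_mul_exp_sq]
  linarith

lemma norm_div_ofReal_sub_mul_exp_sq_le (w : ℂ) {x d s α : ℝ} (hx : d ≤ |x|) (hd : 0 ≤ d)
    (hs : 0 < s) (hα : |Real.cos α| < 1) :
    ‖w / ((x : ℂ) - s * exp (α * I)) ^ 2‖
      ≤ 3 / (1 - |Real.cos α|) * ‖w‖ * ((d + s) ^ 2 + x ^ 2)⁻¹ := by
  set c := 1 - |Real.cos α|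
  have hc : 0 < c := by linarith
  have hB : 0 < (d + s) ^ 2 + x ^ 2 := by positivity
  -- `(d + s)² ≤ 2d² + 2s² ≤ 2x² + 2s²`
  have hds : (d + s) ^ 2 + x ^ 2 ≤ 3 * (x ^ 2 + s ^ 2) := by
    nlinarith [sq_abs x, mul_le_mul hx hx hd (abs_nonneg x), sq_nonneg (d - s)]
  have hq : c * ((d + s) ^ 2 + x ^ 2) / 3 ≤ ‖(x : ℂ) - s * exp (α * I)‖ ^ 2 := by
    have := one_sub_abs_cos_mul_le_norm_sub_sq x s α
    nlinarith
  rw [norm_div, norm_pow]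
  calc ‖w‖ / ‖(x : ℂ) - s * exp (α * I)‖ ^ 2 ≤ ‖w‖ / (c * ((d + s) ^ 2 + x ^ 2) / 3) :=
        div_le_div_of_nonneg_left (norm_nonneg w) (by positivity) hq
    _ = 3 / c * ‖w‖ * ((d + s) ^ 2 + x ^ 2)⁻¹ := by field_simp

lemma norm_integral_div_sub_ray_sq_le {h : ℝ → ℂ} {N lam0 d s α : ℝ}
    (hbd : ∀ᵐ u, ‖h u‖ ≤ N) (hsupp : ∀ᵐ u, |u - lam0| < d → h u = 0)
    (hd : 0 ≤ d) (hs : 0 < s) (hα : |Real.cos α| < 1) :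
    ‖∫ u : ℝ, h u / ((u : ℂ) - (lam0 + s * exp (α * I))) ^ 2‖
      ≤ 3 / (1 - |Real.cos α|) * N * (π / (d + s)) := by
  have hc : 0 < 1 - |Real.cos α| := by linarith
  set M := 3 / (1 - |Real.cos α|) * N
  have hbound : ∀ᵐ u, ‖h u / ((u : ℂ) - (lam0 + s * exp (α * I))) ^ 2‖
      ≤ M * ((d + s) ^ 2 + (u - lam0) ^ 2)⁻¹ := by
    filter_upwards [hbd, hsupp] with u hu hu0
    rcases lt_or_ge |u - lam0| d with hnear | hfar
    · have hN : 0 ≤ N := by simpa [hu0 hnear] using hu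
      simp only [hu0 hnear, zero_div, norm_zero]
      positivity
    · have hshift : (u : ℂ) - (lam0 + s * exp (α * I))
          = ((u - lam0 : ℝ) : ℂ) - s * exp (α * I) := by
        push_cast; ring
      rw [hshift]
      refine (norm_div_ofReal_sub_mul_exp_sq_le (h u) hfar hd hs hα).trans ?_
      exact mul_le_mul_of_nonneg_right (mul_le_mul_of_nonneg_left hu (by positivity))
        (by positivity)
  have hint : Integrable fun u : ℝ ↦ M * ((d + s) ^ 2 + (u - lam0) ^ 2)⁻¹ :=
    ((integrable_inv_sq_add_sq (by positivity)).comp_sub_right lam0).const_mul M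
  calc _ ≤ ∫ u, M * ((d + s) ^ 2 + (u - lam0) ^ 2)⁻¹ := norm_integral_le_of_norm_le hint hbound
    _ = M * (π / (d + s)) := by
      rw [integral_const_mul, integral_sub_right_eq_self (fun x ↦ ((d + s) ^ 2 + x ^ 2)⁻¹),
        integral_univ_inv_sq_add_sq (by positivity)]

lemma abs_cos_lt_one_of_mem_Ioo {α : ℝ} (hα : α ∈ Set.Ioo 0 π) : |Real.cos α| < 1 := by
  rw [← sq_lt_one_iff_abs_lt_one, Real.cos_sq']
  have := Real.sin_pos_of_pos_of_lt_pi hα.1 hα.2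
  nlinarith

lemma norm_add_mul_exp_mul_I_sub_self (lam0 s α : ℝ) (hs : 0 ≤ s) :
    ‖((lam0 : ℂ) + s * exp (α * I)) - lam0‖ = s := by
  rw [add_sub_cancel_left, norm_mul, norm_exp_ofReal_mul_I, mul_one, norm_real,
    Real.norm_of_nonneg hs]

/-- Derivative bound for the Cauchy transform of a bounded function supported away from
`λ₀`: for every `α ∈ (0, π)` and `d > 0` there is `C(α, d)` such that for every `λ₀ ∈ ℝ`
and `h ∈ L² ∩ L∞` vanishing a.e. on `{|u − λ₀| < d}`, along the ray `z = λ₀ + s e^{iα}`,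
`|(1/(2πi)) ∫ h(u)/(u − z)² du| ≤ C(α,d) ‖h‖_∞ / (1 + |z − λ₀|)`. -/
theorem stmt8 (α : ℝ) (hα : α ∈ Set.Ioo 0 Real.pi) (d : ℝ) (hd : 0 < d) :
    ∃ C : ℝ, 0 < C ∧
      ∀ (lam0 : ℝ) (h : ℝ → ℂ),
        MemLp h 2 volume → MemLp h ⊤ volume →
        (∀ᵐ u : ℝ ∂volume, |u - lam0| < d → h u = 0) →
        ∀ s : ℝ, 0 < s →
          norm
              ((1 / (2 * (Real.pi : ℂ) * Complex.I)) *
                ∫ u : ℝ,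
                  h u /
                    ((u : ℂ) - ((lam0 : ℂ) + (s : ℂ) * Complex.exp ((α : ℂ) * Complex.I))) ^ 2)
            ≤ C * (eLpNorm h ⊤ volume).toReal /
              (1 +
                norm
                  (((lam0 : ℂ) + (s : ℂ) * Complex.exp ((α : ℂ) * Complex.I)) - (lam0 : ℂ))) := by
  have hcos := abs_cos_lt_one_of_mem_Ioo hα
  have hc : 0 < 1 - |Real.cos α| := by linarith
  refine ⟨3 / (1 - |Real.cos α|) * (1 + d⁻¹) / 2, by positivity, ?_⟩
  intro lam0 h _ hLtop hsupp s hs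
  have hbd : ∀ᵐ u, ‖h u‖ ≤ (eLpNorm h ⊤ volume).toReal :=
    toReal_eLpNorm hLtop.1 ▸ ae_le_lpNorm_exponent_top hLtop
  set N := (eLpNorm h ⊤ volume).toReal
  have hint := norm_integral_div_sub_ray_sq_le hbd hsupp hd.le hs hcos
  have hfactor : ‖1 / (2 * (π : ℂ) * I)‖ = 1 / (2 * π) := by
    simp [abs_of_pos pi_pos]
  have hds : (d + s)⁻¹ ≤ (1 + d⁻¹) * (1 + s)⁻¹ := by
    rw [← div_eq_mul_inv, le_div_iff₀ (by positivity), inv_mul_le_iff₀ (by positivity)]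
    have : 0 ≤ s * d⁻¹ := by positivity
    nlinarith [mul_inv_cancel₀ hd.ne']
  rw [norm_add_mul_exp_mul_I_sub_self lam0 s α hs.le, norm_mul, hfactor]
  calc 1 / (2 * π) * ‖∫ u : ℝ, h u / ((u : ℂ) - (lam0 + s * exp (α * I))) ^ 2‖
      ≤ 1 / (2 * π) * (3 / (1 - |Real.cos α|) * N * (π / (d + s))) := by gcongr
    _ = 3 / (1 - |Real.cos α|) * N / 2 * (d + s)⁻¹ := by field_simp
    _ ≤ 3 / (1 - |Real.cos α|) * N / 2 * ((1 + d⁻¹) * (1 + s)⁻¹) := by gcongr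
    _ = _ := by field_simp
end

section
/- Let j ≥ 1 be an integer, U ⊂ ℝ an open set, θ : U → ℝ a function that is (j+1)-times differentiable on U with θ'(x) > 0 for all x ∈ U, f : U → ℂ a function that is j-times differentiable on U, t > 0 and ξ ≥ 0. Define w := ξ + tθ' on U (so w > 0 on U) and, for a differentiable function g on U, D_w g := (g/w)'. Then there is a constant C(j), depending only on j, such that for every x ∈ U, |(D_w^j f)(x)| ≤ C(j) · t^{−j} · f_{θ,j}(x). -/
/-!
Expanding `D_w^k f` by the Leibniz rule, with `w' = tθ''`, writes it as a sum of terms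
`c · f^{(β)} · ∏ θ^{(i+2)} · t^s / w^{k+s}`, where the product has `s` factors and
`β + Σ (i + 1) = k`; the absolute values of the integer coefficients `c` add up to at most
`∏_{i<k} (3i + 2)`. Since `ξ ≥ 0`, `w ≥ tθ' > 0`, so `t^s / w^{k+s} ≤ t^{-k} θ'^{-(k+s)}`, and
the resulting monomial is the summand of `w_{k,β}(θ)` indexed by `αᵢ = #{factors θ^{(i+1)}}`.
-/

open MeasureTheory Set

/-- The finite set of tuples `(α₁, …, α_k)` of nonnegative integers with
`α₁ + 2α₂ + ⋯ + kα_k = k − β` (each `αᵢ ≤ k` automatically, so the range `k+1` is no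
restriction). -/
def tupleSet (k β : ℕ) : Finset (Fin k → ℕ) :=
  (Fintype.piFinset fun _ : Fin k => Finset.range (k + 1)).filter
    (fun a => (∑ i : Fin k, ((i : ℕ) + 1) * a i) = k - β)

/-- The phase-dependent weight
`w_{k,β}(θ)(x) = Σ_α |θ'(x)|^{−(k+α₁+⋯+α_k)} |θ''(x)|^{α₁} ⋯ |θ^{(k+1)}(x)|^{α_k}`,
expressed through the derivative family `Θ` (`Θ n` is the `n`-th derivative of `θ`). -/
noncomputable def wWeight (Θ : ℕ → ℝ → ℝ) (k β : ℕ) (x : ℝ) : ℝ :=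
  ∑ a ∈ tupleSet k β,
    |Θ 1 x| ^ (-((k : ℝ) + ∑ i : Fin k, (a i : ℝ))) *
      ∏ i : Fin k, |Θ ((i : ℕ) + 2) x| ^ (a i)

/-- The weighted sum of derivatives `f_{θ,k}(x) = Σ_{β=0}^{k} |f^{(β)}(x)| w_{k,β}(θ)(x)`,
expressed through the derivative families `Df` and `Θ`. -/
noncomputable def fWeighted (Df : ℕ → ℝ → ℂ) (Θ : ℕ → ℝ → ℝ) (k : ℕ) (x : ℝ) : ℝ :=
  ∑ β ∈ Finset.range (k + 1), ‖Df β x‖ * wWeight Θ k β x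

/-- The operator `D_w g = (g/w)'`. -/
noncomputable def DwOp (w : ℝ → ℝ) (g : ℝ → ℂ) : ℝ → ℂ :=
  deriv (fun x => g x / ((w x : ℝ) : ℂ))

namespace List

def bumps : List ℕ → List (List ℕ)
  | [] => []
  | n :: l => ((n + 1) :: l) :: (bumps l).map (n :: ·)

theorem length_of_mem_bumps {l d : List ℕ} (h : d ∈ bumps l) : d.length = l.length := by
  induction l generalizing d with
  | nil => simp [bumps] at h
  | cons n l ih =>
    simp only [bumps, mem_cons, mem_map] at h
    rcases h with rfl | ⟨d, hd, rfl⟩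
    · rfl
    · simp [ih hd]

theorem sum_of_mem_bumps {l d : List ℕ} (h : d ∈ bumps l) : d.sum = l.sum + 1 := by
  induction l generalizing d with
  | nil => simp [bumps] at h
  | cons n l ih =>
    simp only [bumps, mem_cons, mem_map] at h
    rcases h with rfl | ⟨d, hd, rfl⟩
    · simp; omega
    · simp [ih hd]; omega

theorem length_bumps (l : List ℕ) : (bumps l).length = l.length := by
  induction l with
  | nil => rfl
  | cons n l ih => simp [bumps, ih]

theorem norm_sum_map_le {α E : Type*} [SeminormedAddCommGroup E] (l : List α) (f : α → E) :
    ‖(l.map f).sum‖ ≤ (l.map (‖f ·‖)).sum := by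
  simpa [← Multiset.sum_coe, Function.comp_def] using
    norm_multiset_sum_le (l.map f : Multiset E)

@[to_additive]
theorem prod_map_eq_prod_fin_pow_count {M : Type*} [CommMonoid M] (F : ℕ → M) {l : List ℕ}
    {k : ℕ} (hl : ∀ i ∈ l, i < k) : (l.map F).prod = ∏ i : Fin k, F i ^ l.count (i : ℕ) := by
  rw [Finset.prod_list_map_count, Fin.prod_univ_eq_prod_range (fun i => F i ^ l.count i)]
  refine Finset.prod_subset (fun i hi => ?_) (fun i _ hi => ?_)
  · exact Finset.mem_range.2 (hl i (mem_toFinset.1 hi))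
  · rw [count_eq_zero_of_not_mem (fun h => hi (mem_toFinset.2 h)), pow_zero]

end List

section Leibniz

variable {E : Type*} [NormedAddCommGroup E] [NormedSpace ℝ E]
  {𝔸 : Type*} [NormedCommRing 𝔸] [NormedAlgebra ℝ 𝔸]
  {𝕜 : Type*} [NontriviallyNormedField 𝕜] [NormedAlgebra ℝ 𝕜]

theorem HasDerivAt.list_sum {α : Type*} {l : List α} {F : α → ℝ → E} {F' : α → E} {x : ℝ}
    (h : ∀ a ∈ l, HasDerivAt (F a) (F' a) x) :
    HasDerivAt (fun y => (l.map (F · y)).sum) (l.map F').sum x := by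
  induction l with
  | nil => simpa using hasDerivAt_const x (0 : E)
  | cons a l ih =>
    simpa using (h a (by simp)).fun_add (ih fun b hb => h b (by simp [hb]))

theorem hasDerivAt_list_prod_bumps {F : ℕ → ℝ → 𝔸} {x : ℝ} {l : List ℕ}
    (h : ∀ n ∈ l, HasDerivAt (F n) (F (n + 1) x) x) :
    HasDerivAt (fun y => (l.map (F · y)).prod)
      ((l.bumps.map fun d => (d.map (F · x)).prod).sum) x := by
  induction l with
  | nil => simpa [List.bumps] using hasDerivAt_const x (1 : 𝔸)
  | cons n l ih =>
    refine ((h n (by simp)).mul (ih fun m hm => h m (by simp [hm]))).congr_deriv ?_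
    simp [List.bumps, Function.comp_def, List.sum_map_mul_left]

theorem HasDerivAt.inv_pow {g : ℝ → 𝕜} {g' : 𝕜} {x : ℝ} (hg : HasDerivAt g g' x)
    (hx : g x ≠ 0) (N : ℕ) : HasDerivAt (fun y => (g y ^ N)⁻¹) (-(N * g') / g x ^ (N + 1)) x := by
  refine ((hg.pow N).inv (pow_ne_zero N hx)).congr_deriv ?_
  rcases N with _ | N
  · simp
  · simp only [Pi.pow_apply, Nat.add_sub_cancel]
    field_simp
    ring

end Leibniz

-- `⟨c, β, [i₁, …, i_s]⟩` at level `m` is `c f^{(β)} θ^{(i₁+2)} ⋯ θ^{(i_s+2)} t^s / w^{m+s}`.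
structure DwTerm where
  coeff : ℤ
  order : ℕ
  factors : List ℕ

namespace DwTerm

section Eval

variable (Θ : ℕ → ℝ → ℝ) (Df : ℕ → ℝ → ℂ) (t : ℝ) (w : ℝ → ℝ)

noncomputable def eval (m : ℕ) (T : DwTerm) (x : ℝ) : ℂ :=
  T.coeff * Df T.order x * (T.factors.map fun i => (Θ (i + 2) x : ℂ)).prod *
    (t : ℂ) ^ T.factors.length / (w x : ℂ) ^ (m + T.factors.length)

-- Differentiate `f^{(β)}`, then `w^{-(m+s)}` (using `w' = tθ''`), then each `θ`-factor.
def derivTerms (m : ℕ) (T : DwTerm) : List DwTerm :=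
  ⟨T.coeff, T.order + 1, T.factors⟩ ::
    ⟨-(T.coeff * (m + T.factors.length : ℕ)), T.order, 0 :: T.factors⟩ ::
    T.factors.bumps.map (⟨T.coeff, T.order, ·⟩)

theorem eval_div (m : ℕ) (T : DwTerm) (x : ℝ) :
    T.eval Θ Df t w m x / (w x : ℂ) = T.eval Θ Df t w (m + 1) x := by
  simp only [eval, div_div, ← pow_succ, Nat.add_right_comm m 1]

theorem hasDerivAt_eval {m : ℕ} {T : DwTerm} {x : ℝ}
    (hDf : HasDerivAt (Df T.order) (Df (T.order + 1) x) x)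
    (hΘ : ∀ i ∈ T.factors, HasDerivAt (Θ (i + 2)) (Θ (i + 3) x) x)
    (hw : HasDerivAt w (t * Θ 2 x) x) (hw0 : w x ≠ 0) :
    HasDerivAt (T.eval Θ Df t w m) (((T.derivTerms m).map (·.eval Θ Df t w m x)).sum) x := by
  set c : ℂ := (T.coeff : ℂ)
  set s := T.factors.length
  set P : List ℕ → ℝ → ℂ := fun d y => (d.map fun i => (Θ (i + 2) y : ℂ)).prod
  have hP : HasDerivAt (P T.factors) ((T.factors.bumps.map (P · x)).sum) x :=
    hasDerivAt_list_prod_bumps fun i hi => (hΘ i hi).ofReal_comp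
  have hinv := hw.ofReal_comp.inv_pow (by exact_mod_cast hw0) (m + s)
  have hfun : T.eval Θ Df t w m =
      fun y => c * Df T.order y * P T.factors y * (t : ℂ) ^ s * ((w y : ℂ) ^ (m + s))⁻¹ := by
    funext y
    simp [eval, div_eq_mul_inv, P, s, c]
  rw [hfun]
  refine ((((hDf.const_mul c).mul hP).mul_const ((t : ℂ) ^ s)).mul hinv).congr_deriv ?_
  have hbumps : (T.factors.bumps.map fun d => (mk T.coeff T.order d).eval Θ Df t w m x) =
      T.factors.bumps.map fun d =>
        c * Df T.order x * P d x * (t : ℂ) ^ s / (w x : ℂ) ^ (m + s) := by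
    refine List.map_congr_left fun d hd => ?_
    simp [eval, List.length_of_mem_bumps hd, P, s, c]
  simp only [derivTerms, List.map_cons, List.sum_cons, List.map_map, Function.comp_def, hbumps,
    div_eq_mul_inv, List.sum_map_mul_right, List.sum_map_mul_left]
  simp only [eval, P, s, c, List.map_cons, List.prod_cons, List.length_cons, Pi.mul_apply]
  push_cast
  field_simp
  ring

end Eval

def IsAdmissible (k : ℕ) (T : DwTerm) : Prop :=
  T.order + T.factors.sum + T.factors.length = k

namespace IsAdmissible

variable {k : ℕ} {T : DwTerm}

theorem order_le (hT : T.IsAdmissible k) : T.order ≤ k := by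
  unfold IsAdmissible at hT; omega

theorem length_le (hT : T.IsAdmissible k) : T.factors.length ≤ k := by
  unfold IsAdmissible at hT; omega

theorem lt_of_mem_factors (hT : T.IsAdmissible k) {i : ℕ} (hi : i ∈ T.factors) : i < k := by
  have := List.le_sum_of_mem hi
  have := List.length_pos_of_mem hi
  unfold IsAdmissible at hT; omega

theorem of_mem_derivTerms (hT : T.IsAdmissible k) {T' : DwTerm}
    (hT' : T' ∈ T.derivTerms (k + 1)) : T'.IsAdmissible (k + 1) := by
  unfold IsAdmissible at hT ⊢
  simp only [derivTerms, List.mem_cons, List.mem_map] at hT'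
  rcases hT' with rfl | rfl | ⟨d, hd, rfl⟩
  · dsimp only; omega
  · simp only [List.sum_cons, List.length_cons]; omega
  · dsimp only
    rw [List.sum_of_mem_bumps hd, List.length_of_mem_bumps hd]
    omega

theorem count_mem_tupleSet (hT : T.IsAdmissible k) :
    (fun i : Fin k => T.factors.count (i : ℕ)) ∈ tupleSet k T.order := by
  have hsum := List.sum_map_eq_sum_fin_nsmul_count (· + 1) fun _ hi => hT.lt_of_mem_factors hi
  simp only [List.sum_map_add, List.map_id', List.map_const', List.sum_replicate, smul_eq_mul,
    mul_one] at hsum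
  refine Finset.mem_filter.2 ⟨Fintype.mem_piFinset.2 fun i => ?_, ?_⟩
  · exact Finset.mem_range.2 (Nat.lt_succ_of_le (List.count_le_length.trans hT.length_le))
  · simp only [mul_comm ((_ : ℕ) + 1)]
    unfold IsAdmissible at hT
    omega

theorem prod_div_le_wWeight (hT : T.IsAdmissible k) (Θ : ℕ → ℝ → ℝ) (x : ℝ) :
    (T.factors.map fun i => |Θ (i + 2) x|).prod / |Θ 1 x| ^ (k + T.factors.length) ≤
      wWeight Θ k T.order x := by
  have hlt : ∀ i ∈ T.factors, i < k := fun _ hi => hT.lt_of_mem_factors hi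
  have hlen : ∑ i : Fin k, (T.factors.count (i : ℕ) : ℝ) = T.factors.length := by
    simpa [List.map_const', List.sum_replicate] using
      (List.sum_map_eq_sum_fin_nsmul_count (fun _ => (1 : ℝ)) hlt).symm
  refine le_of_eq_of_le ?_ (Finset.single_le_sum (fun a _ => ?_) hT.count_mem_tupleSet)
  · rw [hlen, List.prod_map_eq_prod_fin_pow_count _ hlt, div_eq_inv_mul,
      Real.rpow_neg (abs_nonneg _)]
    norm_cast
  · positivity

end IsAdmissible

end DwTerm

theorem wWeight_nonneg (Θ : ℕ → ℝ → ℝ) (k β : ℕ) (x : ℝ) : 0 ≤ wWeight Θ k β x :=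
  Finset.sum_nonneg fun _ _ => by positivity

theorem fWeighted_nonneg (Df : ℕ → ℝ → ℂ) (Θ : ℕ → ℝ → ℝ) (k : ℕ) (x : ℝ) :
    0 ≤ fWeighted Df Θ k x :=
  Finset.sum_nonneg fun _ _ => mul_nonneg (norm_nonneg _) (wWeight_nonneg Θ k _ x)

theorem norm_mul_wWeight_le_fWeighted (Df : ℕ → ℝ → ℂ) (Θ : ℕ → ℝ → ℝ) {k β : ℕ} (hβ : β ≤ k)
    (x : ℝ) : ‖Df β x‖ * wWeight Θ k β x ≤ fWeighted Df Θ k x :=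
  Finset.single_le_sum (f := fun β => ‖Df β x‖ * wWeight Θ k β x)
    (fun _ _ => mul_nonneg (norm_nonneg _) (wWeight_nonneg Θ k _ x))
    (Finset.mem_range.2 (Nat.lt_succ_of_le hβ))

namespace DwTerm

variable {Θ : ℕ → ℝ → ℝ} {Df : ℕ → ℝ → ℂ} {t : ℝ} {w : ℝ → ℝ} {k : ℕ} {x : ℝ}

theorem norm_eval_le {T : DwTerm} (ht : 0 < t) (hθ : 0 < Θ 1 x) (hw : t * Θ 1 x ≤ w x)
    (hT : T.IsAdmissible k) :
    ‖T.eval Θ Df t w k x‖ ≤ T.coeff.natAbs * fWeighted Df Θ k x / t ^ k := by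
  set s := T.factors.length
  set P := (T.factors.map fun i => |Θ (i + 2) x|).prod
  have hP : 0 ≤ P := List.prod_nonneg fun _ hi => by
    obtain ⟨i, -, rfl⟩ := List.mem_map.1 hi; exact abs_nonneg _
  have hnorm : ‖T.eval Θ Df t w k x‖ =
      T.coeff.natAbs * ‖Df T.order x‖ * P * t ^ s / w x ^ (k + s) := by
    have hw0 : 0 < w x := (mul_pos ht hθ).trans_le hw
    simp [eval, P, s, List.norm_prod, Function.comp_def, abs_of_pos ht, abs_of_pos hw0,
      Nat.cast_natAbs]
  calc ‖T.eval Θ Df t w k x‖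
      = T.coeff.natAbs * ‖Df T.order x‖ * P * t ^ s / w x ^ (k + s) := hnorm
    _ ≤ T.coeff.natAbs * ‖Df T.order x‖ * P * t ^ s / (t * Θ 1 x) ^ (k + s) := by gcongr
    _ = T.coeff.natAbs * (‖Df T.order x‖ * (P / |Θ 1 x| ^ (k + s))) / t ^ k := by
        rw [abs_of_pos hθ, mul_pow, pow_add]
        field_simp
    _ ≤ T.coeff.natAbs * (‖Df T.order x‖ * wWeight Θ k T.order x) / t ^ k := by
        gcongr; exact hT.prod_div_le_wWeight Θ x
    _ ≤ T.coeff.natAbs * fWeighted Df Θ k x / t ^ k := by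
        gcongr; exact norm_mul_wWeight_le_fWeighted Df Θ hT.order_le x

end DwTerm

open DwTerm

def dwExpansion : ℕ → List DwTerm
  | 0 => [⟨1, 0, []⟩]
  | k + 1 => (dwExpansion k).flatMap (derivTerms (k + 1))

theorem isAdmissible_of_mem_dwExpansion {k : ℕ} {T : DwTerm} (hT : T ∈ dwExpansion k) :
    T.IsAdmissible k := by
  induction k generalizing T with
  | zero =>
    rw [dwExpansion, List.mem_singleton] at hT
    subst hT; rfl
  | succ k ih =>
    obtain ⟨S, hS, hTS⟩ := List.mem_flatMap.1 hT
    exact (ih hS).of_mem_derivTerms hTS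

def totalCoeff (L : List DwTerm) : ℕ := (L.map (·.coeff.natAbs)).sum

theorem totalCoeff_derivTerms_le {k : ℕ} {T : DwTerm} (hT : T.IsAdmissible k) :
    totalCoeff (T.derivTerms (k + 1)) ≤ (3 * k + 2) * T.coeff.natAbs := by
  simp only [totalCoeff, derivTerms, List.map_cons, List.sum_cons, List.map_map,
    Function.comp_def, List.map_const', List.sum_replicate, List.length_bumps, Int.natAbs_neg,
    Int.natAbs_mul, Int.natAbs_natCast, smul_eq_mul]
  nlinarith [Nat.mul_le_mul_right T.coeff.natAbs hT.length_le]

theorem totalCoeff_dwExpansion_le (k : ℕ) :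
    totalCoeff (dwExpansion k) ≤ ∏ i ∈ Finset.range k, (3 * i + 2) := by
  induction k with
  | zero => simp [totalCoeff, dwExpansion]
  | succ k ih =>
    calc totalCoeff (dwExpansion (k + 1))
        = ((dwExpansion k).map fun T => totalCoeff (T.derivTerms (k + 1))).sum := by
          simp [dwExpansion, totalCoeff, List.flatMap, List.sum_flatten, Function.comp_def]
      _ ≤ ((dwExpansion k).map fun T => (3 * k + 2) * T.coeff.natAbs).sum :=
          List.sum_le_sum fun _ hT => totalCoeff_derivTerms_le (isAdmissible_of_mem_dwExpansion hT)
      _ = (3 * k + 2) * totalCoeff (dwExpansion k) := List.sum_map_mul_left _ _ _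
      _ ≤ ∏ i ∈ Finset.range (k + 1), (3 * i + 2) := by
          rw [Finset.prod_range_succ, mul_comm]
          exact Nat.mul_le_mul_right _ ih

theorem iterate_DwOp_eq_sum_eval {U : Set ℝ} (hU : IsOpen U) {Θ : ℕ → ℝ → ℝ}
    {Df : ℕ → ℝ → ℂ} {t : ℝ} {w : ℝ → ℝ} {k : ℕ}
    (hΘ : ∀ n < k + 1, ∀ x ∈ U, HasDerivAt (Θ n) (Θ (n + 1) x) x)
    (hDf : ∀ i < k, ∀ x ∈ U, HasDerivAt (Df i) (Df (i + 1) x) x)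
    (hw : ∀ x ∈ U, HasDerivAt w (t * Θ 2 x) x) (hw0 : ∀ x ∈ U, w x ≠ 0) :
    ∀ x ∈ U, (DwOp w)^[k] (Df 0) x = ((dwExpansion k).map (·.eval Θ Df t w k x)).sum := by
  induction k with
  | zero => intro x _; simp [dwExpansion, eval]
  | succ k ih =>
    intro x hx
    have hquot : (fun y => (DwOp w)^[k] (Df 0) y / (w y : ℂ)) =ᶠ[nhds x]
        fun y => ((dwExpansion k).map (·.eval Θ Df t w (k + 1) y)).sum := by
      filter_upwards [hU.mem_nhds hx] with y hy
      rw [ih (fun n hn => hΘ n (by omega)) (fun i hi => hDf i (by omega)) y hy, div_eq_mul_inv,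
        ← List.sum_map_mul_right]
      simp only [← div_eq_mul_inv, eval_div]
    have hderiv := HasDerivAt.list_sum fun T (hT : T ∈ dwExpansion k) =>
      hasDerivAt_eval Θ Df t w (m := k + 1)
        (hDf T.order (by have := (isAdmissible_of_mem_dwExpansion hT).order_le; omega) x hx)
        (fun i hi => hΘ (i + 2)
          (by have := (isAdmissible_of_mem_dwExpansion hT).lt_of_mem_factors hi; omega) x hx)
        (hw x hx) (hw0 x hx)
    rw [Function.iterate_succ_apply', DwOp, hquot.deriv_eq, hderiv.deriv]
    simp [dwExpansion, List.flatMap, List.sum_flatten, Function.comp_def]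

theorem norm_sum_eval_dwExpansion_le {Θ : ℕ → ℝ → ℝ} {Df : ℕ → ℝ → ℂ} {t : ℝ} {w : ℝ → ℝ}
    {k : ℕ} {x : ℝ} (ht : 0 < t) (hθ : 0 < Θ 1 x) (hw : t * Θ 1 x ≤ w x) :
    ‖((dwExpansion k).map (·.eval Θ Df t w k x)).sum‖ ≤
      totalCoeff (dwExpansion k) * fWeighted Df Θ k x / t ^ k :=
  calc ‖((dwExpansion k).map (·.eval Θ Df t w k x)).sum‖
      ≤ ((dwExpansion k).map (‖·.eval Θ Df t w k x‖)).sum := List.norm_sum_map_le _ _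
    _ ≤ ((dwExpansion k).map fun T => T.coeff.natAbs * fWeighted Df Θ k x / t ^ k).sum :=
        List.sum_le_sum fun _ hT => norm_eval_le ht hθ hw (isAdmissible_of_mem_dwExpansion hT)
    _ = totalCoeff (dwExpansion k) * fWeighted Df Θ k x / t ^ k := by
        simp only [totalCoeff, Nat.cast_list_sum, List.map_map, Function.comp_def,
          List.sum_map_mul_right, div_eq_mul_inv]

/-- Pointwise bound on the iterated integration-by-parts operator: if `θ` is `(j+1)`-times
differentiable on an open set `U` with `θ' > 0`, `f` is `j`-times differentiable on `U`,
`t > 0`, `ξ ≥ 0` and `w = ξ + tθ'`, then `|(D_w^j f)(x)| ≤ C(j) t^{−j} f_{θ,j}(x)` on `U`,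
with `C(j)` depending only on `j`. -/
theorem stmt15 (j : ℕ) (hj : 1 ≤ j) :
    ∃ C : ℝ, 0 < C ∧
      ∀ (U : Set ℝ), IsOpen U →
      ∀ (θ : ℝ → ℝ) (Θ : ℕ → ℝ → ℝ) (f : ℝ → ℂ) (Df : ℕ → ℝ → ℂ),
        Θ 0 = θ → Df 0 = f →
        (∀ n < j + 1, ∀ x ∈ U, HasDerivAt (Θ n) (Θ (n + 1) x) x) →
        (∀ x ∈ U, 0 < Θ 1 x) →
        (∀ i < j, ∀ x ∈ U, HasDerivAt (Df i) (Df (i + 1) x) x) →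
        ∀ t : ℝ, 0 < t → ∀ ξ : ℝ, 0 ≤ ξ →
          ∀ x ∈ U,
            ‖(DwOp (fun y => ξ + t * Θ 1 y))^[j] f x‖
              ≤ C * t ^ (-(j : ℝ)) * fWeighted Df Θ j x := by
  refine ⟨∏ i ∈ Finset.range j, (3 * i + 2 : ℕ), by positivity, ?_⟩
  intro U hU θ Θ f Df _ hf hΘ hθ hDf t ht ξ hξ x hx
  subst hf
  have hw : ∀ y ∈ U, HasDerivAt (fun y => ξ + t * Θ 1 y) (t * Θ 2 y) y := fun y hy =>
    ((hΘ 1 (by omega) y hy).const_mul t).const_add ξ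
  have hw0 : ∀ y ∈ U, ξ + t * Θ 1 y ≠ 0 := fun y hy => by
    have := mul_pos ht (hθ y hy); positivity
  rw [iterate_DwOp_eq_sum_eval hU hΘ hDf hw hw0 x hx, Real.rpow_neg ht.le, Real.rpow_natCast]
  refine (norm_sum_eval_dwExpansion_le ht (hθ x hx) (by linarith)).trans ?_
  rw [mul_right_comm, ← div_eq_mul_inv]
  gcongr
  · exact fWeighted_nonneg Df Θ j x
  · exact_mod_cast totalCoeff_dwExpansion_le j
end

section
/- Let R be a unital (not necessarily commutative) ring, let T₀, T₁ ∈ R be such that 1 − T₀ and 1 − T₁ are units of R, and set T := T₀ + T₁. Then (1 − T)(1 + T₀(1 − T₀)^{−1} + T₁(1 − T₁)^{−1}) = 1 − T₁T₀(1 − T₀)^{−1} − T₀T₁(1 − T₁)^{−1}, and (1 + (1 − T₀)^{−1}T₀ + (1 − T₁)^{−1}T₁)(1 − T) = 1 − (1 − T₀)^{−1}T₀T₁ − (1 − T₁)^{−1}T₁T₀. -/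
/-! Since `T₀` commutes with `1 - T₀`, a right inverse `S₀` of `1 - T₀` gives
`(1 - T₀) (1 + T₀ S₀) = 1 - T₀ + T₀ (1 - T₀) S₀ = 1`, and likewise for `T₁`. Expanding
`(1 - T₀ - T₁) (1 + T₀ S₀ + T₁ S₁)` therefore leaves only the cross terms `T₁ T₀ S₀` and
`T₀ T₁ S₁`. The left-handed identity is the same computation in the opposite ring. -/

section Parametrix

variable {R : Type*} [Ring R]

theorem one_sub_mul_one_add_mul_eq_one {T S : R} (h : (1 - T) * S = 1) :
    (1 - T) * (1 + T * S) = 1 := by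
  linear_combination (norm := noncomm_ring) T * h

theorem one_sub_add_mul_parametrix {T₀ T₁ S₀ S₁ : R}
    (h₀ : (1 - T₀) * S₀ = 1) (h₁ : (1 - T₁) * S₁ = 1) :
    (1 - (T₀ + T₁)) * (1 + T₀ * S₀ + T₁ * S₁) = 1 - T₁ * T₀ * S₀ - T₀ * T₁ * S₁ := by
  linear_combination (norm := noncomm_ring)
    one_sub_mul_one_add_mul_eq_one h₀ + one_sub_mul_one_add_mul_eq_one h₁

theorem parametrix_mul_one_sub_add {T₀ T₁ S₀ S₁ : R}
    (h₀ : S₀ * (1 - T₀) = 1) (h₁ : S₁ * (1 - T₁) = 1) :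
    (1 + S₀ * T₀ + S₁ * T₁) * (1 - (T₀ + T₁)) = 1 - S₀ * (T₀ * T₁) - S₁ * (T₁ * T₀) := by
  apply MulOpposite.op_injective
  have hop := one_sub_add_mul_parametrix (R := Rᵐᵒᵖ)
    (T₀ := .op T₀) (T₁ := .op T₁) (S₀ := .op S₀) (S₁ := .op S₁)
    (by simpa using congrArg MulOpposite.op h₀) (by simpa using congrArg MulOpposite.op h₁)
  simpa [mul_assoc] using hop

end Parametrix

/-- Varzugin parametrix identity: in a unital ring, if `1 − T₀` and `1 − T₁` are units
(with two-sided inverses `S₀ = (1 − T₀)⁻¹`, `S₁ = (1 − T₁)⁻¹`) and `T = T₀ + T₁`, then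
`(1 − T)(1 + T₀(1−T₀)⁻¹ + T₁(1−T₁)⁻¹) = 1 − T₁T₀(1−T₀)⁻¹ − T₀T₁(1−T₁)⁻¹` and
`(1 + (1−T₀)⁻¹T₀ + (1−T₁)⁻¹T₁)(1 − T) = 1 − (1−T₀)⁻¹T₀T₁ − (1−T₁)⁻¹T₁T₀`. -/
theorem stmt18 {R : Type*} [Ring R] (T₀ T₁ S₀ S₁ : R)
    (h₀l : S₀ * (1 - T₀) = 1) (h₀r : (1 - T₀) * S₀ = 1)
    (h₁l : S₁ * (1 - T₁) = 1) (h₁r : (1 - T₁) * S₁ = 1) :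
    (1 - (T₀ + T₁)) * (1 + T₀ * S₀ + T₁ * S₁)
        = 1 - T₁ * T₀ * S₀ - T₀ * T₁ * S₁ ∧
    (1 + S₀ * T₀ + S₁ * T₁) * (1 - (T₀ + T₁))
        = 1 - S₀ * (T₀ * T₁) - S₁ * (T₁ * T₀) :=
  ⟨one_sub_add_mul_parametrix h₀r h₁r, parametrix_mul_one_sub_add h₀l h₁l⟩
end

section
/- Let X be a Banach space, let T₀, T₁ be bounded linear operators on X such that 1 − T₀ and 1 − T₁ are invertible, and set T := T₀ + T₁. Assume that ‖T₁T₀(1 − T₀)^{−1} + T₀T₁(1 − T₁)^{−1}‖ ≤ 1/2 and ‖(1 − T₀)^{−1}T₀T₁ + (1 − T₁)^{−1}T₁T₀‖ ≤ 1/2 (operator norms). Then 1 − T is invertible and ‖(1 − T)^{−1}‖ ≤ 2(1 + ‖T₀(1 − T₀)^{−1}‖ + ‖T₁(1 − T₁)^{−1}‖); in particular ‖(1 − T)^{−1}‖ ≤ 2(3 + ‖(1 − T₀)^{−1}‖ + ‖(1 − T₁)^{−1}‖). -/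
/-!
The Varzugin parametrix `P = 1 + T₀(1 - T₀)⁻¹ + T₁(1 - T₁)⁻¹` and its left-hand twin
`P' = 1 + (1 - T₀)⁻¹T₀ + (1 - T₁)⁻¹T₁` invert `1 - T` up to the cross terms:
`(1 - T)P = 1 - E` and `P'(1 - T) = 1 - E'`. Since `‖E‖, ‖E'‖ ≤ 1/2`, Neumann series invert
`1 - E` and `1 - E'` with inverses of norm at most `2`, so `1 - T` has the right inverse
`P(1 - E)⁻¹` and a left inverse; these coincide, and `‖P‖ ≤ 1 + ‖T₀(1 - T₀)⁻¹‖ + ‖T₁(1 - T₁)⁻¹‖`.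
-/

section Parametrix

variable {R : Type*}

/-- With `s = (1 - a)⁻¹` and `t = (1 - b)⁻¹`, this is `1 + a(1 - a)⁻¹ + b(1 - b)⁻¹`. -/
def rightParametrix [Ring R] (a b s t : R) : R := 1 + a * s + b * t

def leftParametrix [Ring R] (a b s t : R) : R := 1 + s * a + t * b

section Ring

variable [Ring R] {a b s t : R}

theorem one_sub_add_mul_rightParametrix (ha : (1 - a) * s = 1) (hb : (1 - b) * t = 1) :
    (1 - (a + b)) * rightParametrix a b s t = 1 - (b * a * s + a * b * t) :=
  calc (1 - (a + b)) * rightParametrix a b s t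
      = 1 + (a * ((1 - a) * s) - a) + (b * ((1 - b) * t) - b) - (b * a * s + a * b * t) := by
        unfold rightParametrix; noncomm_ring
    _ = 1 - (b * a * s + a * b * t) := by rw [ha, hb]; noncomm_ring

theorem leftParametrix_mul_one_sub_add (ha : s * (1 - a) = 1) (hb : t * (1 - b) = 1) :
    leftParametrix a b s t * (1 - (a + b)) = 1 - (s * (a * b) + t * (b * a)) :=
  calc leftParametrix a b s t * (1 - (a + b))
      = 1 + (s * (1 - a) * a - a) + (t * (1 - b) * b - b) - (s * (a * b) + t * (b * a)) := by
        unfold leftParametrix; noncomm_ring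
    _ = 1 - (s * (a * b) + t * (b * a)) := by rw [ha, hb]; noncomm_ring

theorem mul_eq_sub_one_of_one_sub_mul_eq_one (h : (1 - a) * s = 1) : a * s = s - 1 :=
  calc a * s = s - (1 - a) * s := by noncomm_ring
    _ = s - 1 := by rw [h]

end Ring

section NormedRing

variable [NormedRing R]

theorem norm_rightParametrix_le (h1 : ‖(1 : R)‖ ≤ 1) (a b s t : R) :
    ‖rightParametrix a b s t‖ ≤ 1 + ‖a * s‖ + ‖b * t‖ := by
  have := norm_add₃_le (a := (1 : R)) (b := a * s) (c := b * t)
  unfold rightParametrix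
  linarith

theorem norm_mul_le_norm_add_one_of_one_sub_mul_eq_one (h1 : ‖(1 : R)‖ ≤ 1) {a s : R}
    (h : (1 - a) * s = 1) : ‖a * s‖ ≤ ‖s‖ + 1 := by
  rw [mul_eq_sub_one_of_one_sub_mul_eq_one h]
  linarith [norm_sub_le s 1]

variable [CompleteSpace R]

theorem exists_inverse_one_sub_norm_le_two (h1 : ‖(1 : R)‖ ≤ 1) {e : R} (he : ‖e‖ ≤ 1 / 2) :
    ∃ g : R, (1 - e) * g = 1 ∧ g * (1 - e) = 1 ∧ ‖g‖ ≤ 2 := by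
  have he1 : ‖e‖ < 1 := he.trans_lt (by norm_num)
  refine ⟨∑' n : ℕ, e ^ n, mul_neg_geom_series e he1, geom_series_mul_neg e he1, ?_⟩
  have hinv : (1 - ‖e‖)⁻¹ ≤ 2 := by
    rw [inv_le_comm₀ (by linarith) (by norm_num)]
    linarith
  linarith [tsum_geometric_le_of_norm_lt_one e he1]

theorem exists_inverse_one_sub_add_of_norm_cross_le_half (h1 : ‖(1 : R)‖ ≤ 1) {a b s t : R}
    (hal : s * (1 - a) = 1) (har : (1 - a) * s = 1)
    (hbl : t * (1 - b) = 1) (hbr : (1 - b) * t = 1)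
    (hE : ‖b * a * s + a * b * t‖ ≤ 1 / 2) (hE' : ‖s * (a * b) + t * (b * a)‖ ≤ 1 / 2) :
    ∃ S : R, S * (1 - (a + b)) = 1 ∧ (1 - (a + b)) * S = 1 ∧
      ‖S‖ ≤ 2 * (1 + ‖a * s‖ + ‖b * t‖) := by
  obtain ⟨G, hG, -, hGnorm⟩ := exists_inverse_one_sub_norm_le_two h1 hE
  obtain ⟨G', -, hG', -⟩ := exists_inverse_one_sub_norm_le_two h1 hE'
  have hright : (1 - (a + b)) * (rightParametrix a b s t * G) = 1 := by
    rw [← mul_assoc, one_sub_add_mul_rightParametrix har hbr, hG]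
  have hleft : (G' * leftParametrix a b s t) * (1 - (a + b)) = 1 := by
    rw [mul_assoc, leftParametrix_mul_one_sub_add hal hbl, hG']
  refine ⟨rightParametrix a b s t * G, ?_, hright, ?_⟩
  · rwa [← left_inv_eq_right_inv hleft hright]
  · calc ‖rightParametrix a b s t * G‖ ≤ ‖rightParametrix a b s t‖ * ‖G‖ := norm_mul_le _ _
      _ ≤ (1 + ‖a * s‖ + ‖b * t‖) * 2 := by
        gcongr
        exact norm_rightParametrix_le h1 a b s t
      _ = 2 * (1 + ‖a * s‖ + ‖b * t‖) := mul_comm _ _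

end NormedRing

end Parametrix

/-- Quantitative invertibility via the Varzugin parametrix: on a Banach space `X`, if
`1 − T₀` and `1 − T₁` are invertible (with two-sided inverses `S₀`, `S₁`), `T = T₀ + T₁`,
and the cross terms satisfy `‖T₁T₀(1−T₀)⁻¹ + T₀T₁(1−T₁)⁻¹‖ ≤ 1/2` and
`‖(1−T₀)⁻¹T₀T₁ + (1−T₁)⁻¹T₁T₀‖ ≤ 1/2`, then `1 − T` is invertible with
`‖(1−T)⁻¹‖ ≤ 2(1 + ‖T₀(1−T₀)⁻¹‖ + ‖T₁(1−T₁)⁻¹‖)`; in particular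
`‖(1−T)⁻¹‖ ≤ 2(3 + ‖(1−T₀)⁻¹‖ + ‖(1−T₁)⁻¹‖)`. -/
theorem stmt19 {X : Type*} [NormedAddCommGroup X] [NormedSpace ℝ X] [CompleteSpace X]
    (T₀ T₁ S₀ S₁ : X →L[ℝ] X)
    (h₀l : S₀ * (1 - T₀) = 1) (h₀r : (1 - T₀) * S₀ = 1)
    (h₁l : S₁ * (1 - T₁) = 1) (h₁r : (1 - T₁) * S₁ = 1)
    (hcross1 : ‖T₁ * T₀ * S₀ + T₀ * T₁ * S₁‖ ≤ 1 / 2)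
    (hcross2 : ‖S₀ * (T₀ * T₁) + S₁ * (T₁ * T₀)‖ ≤ 1 / 2) :
    ∃ S : X →L[ℝ] X,
      S * (1 - (T₀ + T₁)) = 1 ∧ (1 - (T₀ + T₁)) * S = 1 ∧
      ‖S‖ ≤ 2 * (1 + ‖T₀ * S₀‖ + ‖T₁ * S₁‖) ∧
      ‖S‖ ≤ 2 * (3 + ‖S₀‖ + ‖S₁‖) := by
  have h1 : ‖(1 : X →L[ℝ] X)‖ ≤ 1 := ContinuousLinearMap.norm_id_le
  obtain ⟨S, hSl, hSr, hS⟩ :=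
    exists_inverse_one_sub_add_of_norm_cross_le_half h1 h₀l h₀r h₁l h₁r hcross1 hcross2
  have h₀ := norm_mul_le_norm_add_one_of_one_sub_mul_eq_one h1 h₀r
  have h₁ := norm_mul_le_norm_add_one_of_one_sub_mul_eq_one h1 h₁r
  exact ⟨S, hSl, hSr, hS, by linarith⟩
end
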